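/- Let y : [0,∞) → E be a nonconformity flow trajectory, let ε > 0, and assume |S(y(0)) − τ| > ε. Define the ε-hitting time T_ε := inf { t ≥ 0 : |S(y(t)) − τ| ≤ ε }. Then T_ε = (1/λ)·log( |S(y(0)) − τ| / ε ). -/

import Mathlib

open scoped RealInnerProductSpace

/-- The nonconformity velocity field
`v(y) = -λ (S y - τ) ∇S(y) / ‖∇S(y)‖²`. -/
noncomputable def ncVel {n : ℕ} (S : EuclideanSpace ℝ (Fin n) → ℝ) (τ lam : ℝ)
    (y : EuclideanSpace ℝ (Fin n)) : EuclideanSpace ℝ (Fin n) :=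
  (-lam * (S y - τ) / ‖gradient S y‖ ^ 2) • gradient S y

/-! By the chain rule, `d/dt (S (y t) - τ) = ⟪∇S (y t), v (y t)⟫ = -λ (S (y t) - τ)`, so the
residual along the flow is `(S (y 0) - τ) e^{-λ t}`. Its modulus decreases strictly, hence the
set of times where it is at most `ε` is the half-line `[λ⁻¹ log (|S (y 0) - τ| / ε), ∞)`. -/

open Real Set

theorem eq_exp_mul_smul_of_hasDerivAt_eq_smul {E : Type*} [NormedAddCommGroup E]
    [NormedSpace ℝ E] {f : ℝ → E} {c : ℝ}
    (hf : ∀ t, 0 ≤ t → HasDerivAt f (c • f t) t) {t : ℝ} (ht : 0 ≤ t) :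
    f t = exp (c * t) • f 0 := by
  have hderiv : ∀ s, 0 ≤ s → HasDerivAt (fun s => exp (-c * s) • f s) 0 s := fun s hs => by
    refine (((hasDerivAt_id s).const_mul (-c)).exp.smul (hf s hs)).congr_deriv ?_
    rw [smul_smul, ← add_smul]
    simp
  have hconst : exp (-c * t) • f t = exp (-c * 0) • f 0 :=
    constant_of_has_deriv_right_zero
      (fun s hs => (hderiv s hs.1).continuousAt.continuousWithinAt)
      (fun s hs => (hderiv s hs.1).hasDerivWithinAt) t ⟨ht, le_rfl⟩
  rw [mul_zero, exp_zero, one_smul] at hconst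
  rw [← hconst, smul_smul, ← exp_add]
  simp

theorem inner_gradient_ncVel {n : ℕ} (S : EuclideanSpace ℝ (Fin n) → ℝ) (τ lam : ℝ)
    {x : EuclideanSpace ℝ (Fin n)} (hx : gradient S x ≠ 0) :
    ⟪gradient S x, ncVel S τ lam x⟫ = -lam * (S x - τ) := by
  have : ‖gradient S x‖ ≠ 0 := norm_ne_zero_iff.mpr hx
  rw [ncVel, real_inner_smul_right, real_inner_self_eq_norm_sq]
  field_simp

theorem hasDerivAt_sub_of_hasDerivAt_ncVel {n : ℕ} {S : EuclideanSpace ℝ (Fin n) → ℝ}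
    {τ lam : ℝ} {y : ℝ → EuclideanSpace ℝ (Fin n)} {t : ℝ} (hS : DifferentiableAt ℝ S (y t))
    (hy : HasDerivAt y (ncVel S τ lam (y t)) t) (hgrad : gradient S (y t) ≠ 0) :
    HasDerivAt (fun s => S (y s) - τ) (-lam * (S (y t) - τ)) t := by
  have := (hS.hasGradientAt.hasFDerivAt.comp_hasDerivAt t hy).sub_const τ
  rwa [InnerProductSpace.toDual_apply_apply, inner_gradient_ncVel S τ lam hgrad] at this

theorem sub_eq_exp_mul_of_hasDerivAt_ncVel {n : ℕ} {S : EuclideanSpace ℝ (Fin n) → ℝ}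
    (hS : Differentiable ℝ S) {τ lam : ℝ} {y : ℝ → EuclideanSpace ℝ (Fin n)}
    (hy : ∀ t, 0 ≤ t → HasDerivAt y (ncVel S τ lam (y t)) t)
    (hgrad : ∀ t, 0 ≤ t → gradient S (y t) ≠ 0) {t : ℝ} (ht : 0 ≤ t) :
    S (y t) - τ = exp (-(lam * t)) * (S (y 0) - τ) := by
  rw [← neg_mul]
  exact eq_exp_mul_smul_of_hasDerivAt_eq_smul
    (fun s hs => hasDerivAt_sub_of_hasDerivAt_ncVel (hS _) (hy s hs) (hgrad s hs)) ht

theorem mul_exp_neg_le_iff {A ε lam t : ℝ} (hε : 0 < ε) (hA : 0 < A) (hlam : 0 < lam) :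
    A * exp (-(lam * t)) ≤ ε ↔ 1 / lam * log (A / ε) ≤ t := by
  rw [exp_neg, ← div_eq_mul_inv, div_le_iff₀ (exp_pos _), ← div_le_iff₀' hε,
    ← log_le_iff_le_exp (by positivity), one_div_mul_eq_div, div_le_iff₀' hlam]

/-- the ε-hitting time of a nonconformity flow trajectory equals
`(1/λ) log(|S(y(0)) - τ| / ε)`. -/
theorem eps_hitting_time {n : ℕ} (S : EuclideanSpace ℝ (Fin n) → ℝ)
    (hS : Differentiable ℝ S) (τ lam : ℝ) (hlam : 0 < lam)
    (y : ℝ → EuclideanSpace ℝ (Fin n))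
    (hy : ∀ t : ℝ, 0 ≤ t → HasDerivAt y (ncVel S τ lam (y t)) t)
    (hgrad : ∀ t : ℝ, 0 ≤ t → gradient S (y t) ≠ 0)
    (ε : ℝ) (hε : 0 < ε) (h0 : ε < |S (y 0) - τ|) :
    sInf {t : ℝ | 0 ≤ t ∧ |S (y t) - τ| ≤ ε} =
      (1 / lam) * Real.log (|S (y 0) - τ| / ε) := by
  set T := 1 / lam * log (|S (y 0) - τ| / ε)
  have hT : 0 < T := mul_pos (one_div_pos.mpr hlam) (log_pos ((one_lt_div hε).mpr h0))
  have hdecay : ∀ t, 0 ≤ t → (|S (y t) - τ| ≤ ε ↔ T ≤ t) := fun t ht => by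
    rw [sub_eq_exp_mul_of_hasDerivAt_ncVel hS hy hgrad ht, abs_mul, abs_exp, mul_comm,
      mul_exp_neg_le_iff hε (hε.trans h0) hlam]
  have hset : {t : ℝ | 0 ≤ t ∧ |S (y t) - τ| ≤ ε} = Ici T := by
    ext t
    exact ⟨fun ⟨ht, hle⟩ => (hdecay t ht).mp hle,
      fun hTt => ⟨hT.le.trans hTt, (hdecay t (hT.le.trans hTt)).mpr hTt⟩⟩
  rw [hset, csInf_Ici]
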